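/- With f as above, for every z on the unit circle of the form z = e^{2πiθ} with |θ| ≤ ε/2, one has Re f(z) ≥ C/(kε) for an absolute constant C > 0. -/

import Mathlib

/-!
Every term of the average has nonnegative real part, because `Re (a / (a - w)) ≥ 0` whenever
`‖w‖ ≤ 1 ≤ a`. So `Re f(z)` is at least `1/k` times the `j = 0` term `Re (a / (a - z))`,
`a = 1 + ε`, whose numerator `a (a - Re z)` is at least `ε` and whose denominator
`|a - z|² ≤ (ε + |z - 1|)² ≤ ((1 + π) ε)²` since `|e^{2πiθ} - 1| ≤ 2π|θ| ≤ πε`.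
This gives the constant `C = 1 / (1 + π)²`.
-/

open Real Complex

/-- The Kahane–Katznelson function built from the `k`-th roots of unity. -/
noncomputable def KKfun (k : ℕ) (ε : ℝ) (z : ℂ) : ℂ :=
  (1 / k) * ∑ j ∈ Finset.range k,
    (1 + (ε:ℂ)) / (1 + (ε:ℂ) - (starRingEnd ℂ) (Complex.exp (2 * π * Complex.I * j / k)) * z)

namespace Complex

theorem re_ofReal_div_ofReal_sub (a : ℝ) (w : ℂ) :
    ((a : ℂ) / (a - w)).re = a * (a - w.re) / ‖(a : ℂ) - w‖ ^ 2 := by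
  rw [div_re, ← normSq_eq_norm_sq]
  simp [sub_re, sub_im]

theorem re_ofReal_div_ofReal_sub_nonneg {a : ℝ} {w : ℂ} (ha : 0 ≤ a) (hw : ‖w‖ ≤ a) :
    0 ≤ ((a : ℂ) / (a - w)).re := by
  rw [re_ofReal_div_ofReal_sub]
  have : w.re ≤ a := (re_le_norm w).trans hw
  exact div_nonneg (mul_nonneg ha (by linarith)) (sq_nonneg _)

theorem div_sq_le_re_ofReal_div_ofReal_sub {a : ℝ} {w : ℂ} (ha : 1 < a) (hw : ‖w‖ ≤ 1) :
    (a - 1) / (a - 1 + ‖w - 1‖) ^ 2 ≤ ((a : ℂ) / (a - w)).re := by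
  rw [re_ofReal_div_ofReal_sub]
  have hre : w.re ≤ 1 := (re_le_norm w).trans hw
  have hnum : a - 1 ≤ a * (a - w.re) := by nlinarith
  have hden_pos : 0 < ‖(a : ℂ) - w‖ := by
    have := norm_sub_norm_le (a : ℂ) w
    rw [norm_real, Real.norm_of_nonneg (by linarith)] at this
    linarith
  have hden : ‖(a : ℂ) - w‖ ≤ a - 1 + ‖w - 1‖ := by
    calc ‖(a : ℂ) - w‖ = ‖((a - 1 : ℝ) : ℂ) - (w - 1)‖ := by push_cast; ring_nf
      _ ≤ ‖((a - 1 : ℝ) : ℂ)‖ + ‖w - 1‖ := norm_sub_le _ _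
      _ = a - 1 + ‖w - 1‖ := by rw [norm_real, Real.norm_of_nonneg (by linarith)]
  gcongr
  linarith

end Complex

theorem norm_exp_two_pi_I_mul_sub_one_le (θ : ℝ) :
    ‖exp (2 * π * I * θ) - 1‖ ≤ 2 * π * |θ| := by
  have h := Real.norm_exp_I_mul_ofReal_sub_one_le (x := 2 * π * θ)
  rw [Real.norm_eq_abs, abs_mul, abs_of_pos two_pi_pos] at h
  convert h using 4
  push_cast
  ring

theorem KKfun_re_ge_first_term {k : ℕ} (hk : 0 < k) {ε : ℝ} (hε : 0 ≤ ε) {z : ℂ} (hz : ‖z‖ ≤ 1) :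
    (1 / k) * (((1 + ε : ℝ) : ℂ) / ((1 + ε : ℝ) - z)).re ≤ (KKfun k ε z).re := by
  have hroot (j : ℕ) : ‖(starRingEnd ℂ) (exp (2 * π * I * j / k)) * z‖ ≤ 1 + ε := by
    simpa [norm_exp] using hz.trans (by linarith)
  rw [KKfun, show (1 / (k : ℂ)) = ((1 / k : ℝ) : ℂ) by push_cast; rfl, re_ofReal_mul, re_sum]
  gcongr
  push_cast
  refine le_trans (le_of_eq ?_) (Finset.single_le_sum (fun j _ ↦ ?_) (Finset.mem_range.2 hk))
  · simp
  · exact_mod_cast re_ofReal_div_ofReal_sub_nonneg (by linarith) (hroot j)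

/-- There is an absolute constant `C > 0` such that, for every integer `k ≥ 2`, every
`ε ∈ (0,1)` and every `z = e^{2πiθ}` with `|θ| ≤ ε/2`, one has `Re f(z) ≥ C/(kε)`. -/
theorem KKfun_re_lower_bound_near_one :
    ∃ C : ℝ, 0 < C ∧ ∀ (k : ℕ), 2 ≤ k → ∀ ε ∈ Set.Ioo (0:ℝ) 1, ∀ θ : ℝ, |θ| ≤ ε / 2 →
      C / (k * ε) ≤ (KKfun k ε (Complex.exp (2 * π * Complex.I * θ))).re := by
  refine ⟨1 / (1 + π) ^ 2, by positivity, fun k hk ε ⟨hε, _⟩ θ hθ ↦ ?_⟩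
  set z := exp (2 * π * I * θ)
  have hz : ‖z‖ = 1 := by simp [z, norm_exp]
  have hz1 : ‖z - 1‖ ≤ π * ε := by
    have := norm_exp_two_pi_I_mul_sub_one_le θ
    nlinarith [pi_pos]
  have hterm : 1 / ((1 + π) ^ 2 * ε) ≤ (((1 + ε : ℝ) : ℂ) / ((1 + ε : ℝ) - z)).re := by
    refine le_trans ?_ (div_sq_le_re_ofReal_div_ofReal_sub (by linarith) hz.le)
    rw [add_sub_cancel_left, div_le_div_iff₀ (by positivity) (by positivity)]
    nlinarith [norm_nonneg (z - 1)]
  calc 1 / (1 + π) ^ 2 / (k * ε) = 1 / k * (1 / ((1 + π) ^ 2 * ε)) := by field_simp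
    _ ≤ 1 / k * (((1 + ε : ℝ) : ℂ) / ((1 + ε : ℝ) - z)).re := by gcongr
    _ ≤ (KKfun k ε z).re := KKfun_re_ge_first_term (by omega) hε.le hz.le
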